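/- Let u be a Lyndon word of length at least 2 with Shirshov factorization sh(u) = (u', u''). If v is a Lyndon word that is a factor of u, then either v is a factor of u', or v is a factor of u'', or v is a prefix of u with length strictly greater than the length of u'. -/

import Mathlib

variable {X : Type*} [LinearOrder X]

/-- The lexicographical order of the paper: `u <_lex v` iff the words first differ with the
letter of `u` smaller, or `v` is a proper prefix of `u`. -/
def LexLt (u v : List X) : Prop :=
  (∃ (r s t : List X) (a b : X), a < b ∧ u = r ++ a :: s ∧ v = r ++ b :: t) ∨
    (v <+: u ∧ v ≠ u)

/-- A word `u` is Lyndon if it is nonempty and `u >_lex w ++ v` for every factorization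
`u = v ++ w` with `v, w` nonempty. -/
def IsLyndon (u : List X) : Prop :=
  u ≠ [] ∧ ∀ v w : List X, u = v ++ w → v ≠ [] → w ≠ [] → LexLt (w ++ v) u

/-- `(u', u'')` is the Shirshov factorization of `u`: `u = u' ++ u''` where `u''` is the
longest proper Lyndon suffix of `u`. -/
def IsShirshov (u u1 u2 : List X) : Prop :=
  u = u1 ++ u2 ∧ u1 ≠ [] ∧ u2 ≠ [] ∧ IsLyndon u2 ∧
    ∀ s : List X, s <:+ u → s ≠ u → IsLyndon s → s.length ≤ u2.length

/-! ### Auxiliary lemmas about `LexLt` -/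

private theorem lexAux_prefix {w : List X} (hw : w ≠ []) :
    ∀ v : List X, List.Lex (· > ·) v (v ++ w)
  | [] => by
    cases w with
    | nil => exact absurd rfl hw
    | cons a l => exact List.Lex.nil
  | a :: v => List.Lex.cons (lexAux_prefix hw v)

private theorem lexLt_cons {x y : List X} (a : X) (h : LexLt x y) : LexLt (a :: x) (a :: y) := by
  rcases h with ⟨r, s, t, b, c, hbc, rfl, rfl⟩ | ⟨⟨w, rfl⟩, hne⟩
  · exact Or.inl ⟨a :: r, s, t, b, c, hbc, rfl, rfl⟩
  · exact Or.inr ⟨⟨w, rfl⟩, by simpa using hne⟩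

/-- Bridge between `LexLt` and Mathlib's `List.Lex`. -/
private theorem lexLt_iff {u v : List X} : LexLt u v ↔ List.Lex (· > ·) v u := by
  constructor
  · rintro (⟨r, s, t, a, b, hab, rfl, rfl⟩ | ⟨⟨w, rfl⟩, hne⟩)
    · exact List.Lex.append_left (· > ·) (List.Lex.rel hab) r
    · exact lexAux_prefix (fun h => hne (by simp [h])) v
  · intro h
    induction h with
    | nil => exact Or.inr ⟨List.nil_prefix, by simp⟩
    | @cons a l₁ l₂ h ih => exact lexLt_cons a ih
    | @rel a₁ l₁ a₂ l₂ h => exact Or.inl ⟨[], l₂, l₁, a₂, a₁, h, rfl, rfl⟩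

private theorem lexAux_trans : ∀ {x y z : List X},
    List.Lex (· > ·) x y → List.Lex (· > ·) y z → List.Lex (· > ·) x z
  | _, _, _, List.Lex.nil, List.Lex.cons _ => List.Lex.nil
  | _, _, _, List.Lex.nil, List.Lex.rel _ => List.Lex.nil
  | _, _, _, List.Lex.cons h₁, List.Lex.cons h₂ => List.Lex.cons (lexAux_trans h₁ h₂)
  | _, _, _, List.Lex.cons _, List.Lex.rel h₂ => List.Lex.rel h₂
  | _, _, _, List.Lex.rel h₁, List.Lex.cons _ => List.Lex.rel h₁
  | _, _, _, List.Lex.rel h₁, List.Lex.rel h₂ => List.Lex.rel (lt_trans h₂ h₁)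

private theorem lexLt_trans {x y z : List X} (h₁ : LexLt x y) (h₂ : LexLt y z) : LexLt x z := by
  rw [lexLt_iff] at *
  exact lexAux_trans h₂ h₁

private theorem lexLt_irrefl (x : List X) : ¬ LexLt x x := by
  rw [lexLt_iff]
  exact fun h => (List.Lex.asymm _).asymm _ _ h h

private theorem lexLt_asymm {x y : List X} (h : LexLt x y) : ¬ LexLt y x := by
  rw [lexLt_iff] at *
  exact fun h' => (List.Lex.asymm _).asymm _ _ h h'

private theorem lexLt_total (x y : List X) : x = y ∨ LexLt x y ∨ LexLt y x := by
  rcases trichotomous_of (List.Lex (· > · : X → X → Prop)) x y with h | h | h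
  · exact Or.inr (Or.inr (lexLt_iff.2 h))
  · exact Or.inl h
  · exact Or.inr (Or.inl (lexLt_iff.2 h))

private theorem lexLt_ext {s t : List X} (ht : t ≠ []) : LexLt (s ++ t) s :=
  Or.inr ⟨⟨t, rfl⟩, fun h => ht (List.self_eq_append_right.1 h)⟩

private theorem lexLt_append_left_iff {c x y : List X} :
    LexLt (c ++ x) (c ++ y) ↔ LexLt x y := by
  rw [lexLt_iff, lexLt_iff]
  induction c with
  | nil => simp
  | cons a c ih => simpa [List.lex_cons_iff] using ih

private theorem lexAux_of_append_right : ∀ {x y s : List X}, x.length = y.length → x ≠ y →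
    List.Lex (· > ·) (x ++ s) (y ++ s) → List.Lex (· > ·) x y
  | [], [], _, _, hne, _ => absurd rfl hne
  | [], _ :: _, _, hl, _, _ => by simp at hl
  | _ :: _, [], _, hl, _, _ => by simp at hl
  | a :: x, b :: y, s, hl, hne, h => by
    cases h with
    | rel h => exact List.Lex.rel h
    | cons h =>
      refine List.Lex.cons (lexAux_of_append_right (by simpa using hl) ?_ h)
      intro hxy
      exact hne (by rw [hxy])

private theorem lexLt_of_append_right {x y s : List X} (hl : x.length = y.length) (hne : x ≠ y)
    (h : LexLt (x ++ s) (y ++ s)) : LexLt x y := by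
  rw [lexLt_iff] at *
  exact lexAux_of_append_right hl.symm (fun h' => hne h'.symm) h

/-- A proper nonempty suffix of a Lyndon word is `LexLt` it. -/
private theorem lyndon_suffix_lt {u t s : List X} (hu : IsLyndon u) (heq : u = t ++ s)
    (ht : t ≠ []) (hs : s ≠ []) : LexLt s u := by
  have hrot : LexLt (s ++ t) u := hu.2 t s heq ht hs
  rcases hrot with ⟨r, s', t', a, b, hab, h1, h2⟩ | ⟨hpre, hne⟩
  · rcases le_or_gt s.length r.length with hr | hr
    · -- `s` would be a prefix of `u`; derive a contradiction
      have hst : s <+: s ++ t := ⟨t, rfl⟩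
      have hrst : r <+: s ++ t := ⟨a :: s', h1.symm⟩
      have hsr : s <+: r := List.prefix_of_prefix_length_le hst hrst hr
      have hsu : s <+: u := hsr.trans ⟨b :: t', h2.symm⟩
      obtain ⟨w, hw⟩ := hsu
      have hlen1 : u.length = t.length + s.length := by rw [heq]; simp
      have hlen2 : s.length + w.length = u.length := by rw [← hw]; simp
      have htne' : t.length ≠ 0 := fun h => ht (List.length_eq_zero_iff.1 h)
      have hwne : w ≠ [] := by
        intro h
        rw [h] at hlen2
        simp at hlen2
        omega
      have htw : LexLt t w := by
        have h' : LexLt (s ++ t) (s ++ w) := by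
          rw [hw]
          exact hu.2 t s heq ht hs
        exact lexLt_append_left_iff.1 h'
      rcases eq_or_ne w t with rfl | hwt
      · exact absurd htw (lexLt_irrefl _)
      · have hrot2 : LexLt (w ++ s) (t ++ s) := by
          rw [← heq]
          exact hu.2 s w hw.symm hs hwne
        have hwlen : w.length = t.length := by omega
        have := lexLt_of_append_right hwlen hwt hrot2
        exact absurd htw (lexLt_asymm this)
    · -- the first difference happens inside `s`
      have hras : r ++ [a] <+: s := by
        refine List.prefix_of_prefix_length_le ⟨s', ?_⟩ (⟨t, rfl⟩ : s <+: s ++ t) ?_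
        · rw [h1]; simp
        · simpa using hr
      obtain ⟨s₂, hs₂⟩ := hras
      exact Or.inl ⟨r, s₂, t', a, b, hab, by rw [← hs₂]; simp, h2⟩
  · have hlen : u.length = (s ++ t).length := by
      rw [heq]; simp; omega
    exact absurd (hpre.eq_of_length hlen) hne

/-- Every nonempty proper suffix of `u` is at most the Shirshov suffix `u2`. -/
private theorem shirshov_suffix_le {u u1 u2 : List X} (hsh : IsShirshov u u1 u2) :
    ∀ s : List X, s <:+ u → s ≠ [] → s ≠ u → s = u2 ∨ LexLt s u2 := by
  obtain ⟨hu12, h1ne, h2ne, h2L, hmax⟩ := hsh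
  suffices H : ∀ n (s : List X), s.length ≤ n → s <:+ u → s ≠ [] → s ≠ u →
      s = u2 ∨ LexLt s u2 by
    exact fun s hs hne hneu => H s.length s le_rfl hs hne hneu
  intro n
  induction n with
  | zero =>
    intro s hl _ hne _
    exact absurd (List.length_eq_zero_iff.1 (Nat.le_zero.1 hl)) hne
  | succ n ih =>
    intro s hl hsuf hsne hsnu
    by_cases hLyn : IsLyndon s
    · have hle : s.length ≤ u2.length := hmax s hsuf hsnu hLyn
      have hs2 : s <:+ u2 := List.suffix_of_suffix_length_le hsuf ⟨u1, hu12.symm⟩ hle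
      rcases eq_or_ne s u2 with rfl | hne2
      · exact Or.inl rfl
      · obtain ⟨t, ht⟩ := hs2
        have htne : t ≠ [] := by
          intro h
          rw [h] at ht
          exact hne2 (by simpa using ht)
        exact Or.inr (lyndon_suffix_lt h2L ht.symm htne hsne)
    · rw [IsLyndon] at hLyn
      push_neg at hLyn
      obtain ⟨c, d, hcd, hc, hd, hnlt⟩ := hLyn hsne
      have hsd : LexLt s d := by
        rcases lexLt_total s (d ++ c) with h | h | h
        · rw [h]; exact lexLt_ext hc
        · exact lexLt_trans h (lexLt_ext hc)
        · exact absurd h hnlt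
      have hdsuf : d <:+ u := List.IsSuffix.trans ⟨c, hcd.symm⟩ hsuf
      have hdlen : d.length < s.length := by
        have h1 : s.length = c.length + d.length := by rw [hcd]; simp
        have h2 : 0 < c.length := List.length_pos_iff.2 hc
        omega
      have hdnu : d ≠ u := by
        intro h
        have h1 : s.length ≤ u.length := hsuf.length_le
        rw [← h] at h1
        omega
      rcases ih d (by omega) hdsuf hd hdnu with rfl | h
      · exact Or.inr hsd
      · exact Or.inr (lexLt_trans hsd h)

theorem lyndon_factor_shirshov (u u1 u2 v : List X) (hu : IsLyndon u) (hlen : 2 ≤ u.length)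
    (hsh : IsShirshov u u1 u2) (hv : IsLyndon v) (hf : v <:+: u) :
    v <:+: u1 ∨ v <:+: u2 ∨ (v <+: u ∧ u1.length < v.length) := by
  obtain ⟨a, b, hocc⟩ := hf
  obtain ⟨hu12, h1ne, h2ne, h2L, hmax⟩ := hsh
  have hocc' : a ++ (v ++ b) = u := by rw [← hocc]; simp
  have hlocc : a.length + (v.length + b.length) = u1.length + u2.length := by
    have := congrArg List.length hocc'
    simpa [hu12] using this
  rcases le_or_gt (a.length + v.length) u1.length with hA | hC2
  · -- entirely inside u1
    left
    have hav : a ++ v <+: u1 := by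
      refine List.prefix_of_prefix_length_le ⟨b, by rw [← hocc']; simp⟩ ⟨u2, hu12.symm⟩ ?_
      simpa using hA
    obtain ⟨w, hw⟩ := hav
    exact ⟨a, w, by rw [← hw]⟩
  rcases le_or_gt u1.length a.length with hB | hC1
  · -- entirely inside u2
    right; left
    have hvb : v ++ b <:+ u2 := by
      refine List.suffix_of_suffix_length_le ⟨a, hocc'⟩ ⟨u1, hu12.symm⟩ ?_
      simp only [List.length_append]
      omega
    obtain ⟨w, hw⟩ := hvb
    exact ⟨w, b, by rw [← hw]; simp⟩
  · -- straddles the boundary between u1 and u2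
    have hvne : v ≠ [] := hv.1
    have hap : a <+: u1 :=
      List.prefix_of_prefix_length_le ⟨v ++ b, hocc'⟩ ⟨u2, hu12.symm⟩ (le_of_lt hC1)
    obtain ⟨p, hp⟩ := hap
    have hplen : a.length + p.length = u1.length := by
      have := congrArg List.length hp
      simpa using this
    have hpne : p ≠ [] := by
      rintro rfl
      simp at hplen
      omega
    have hkey : v ++ b = p ++ u2 := by
      apply List.append_cancel_left (as := a)
      rw [hocc', hu12, ← hp]
      simp
    have hpvlen : p.length < v.length := by omega
    have hpv : p <+: v :=
      List.prefix_of_prefix_length_le ⟨u2, hkey.symm⟩ ⟨b, rfl⟩ (le_of_lt hpvlen)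
    obtain ⟨q, hq⟩ := hpv
    have hqne : q ≠ [] := by
      rintro rfl
      rw [List.append_nil] at hq
      rw [hq] at hpvlen
      exact lt_irrefl _ hpvlen
    have hqb : q ++ b = u2 := by
      apply List.append_cancel_left (as := p)
      rw [← hkey, ← hq]
      simp
    rcases eq_or_ne a [] with rfl | hane
    · -- the occurrence is a prefix of u
      right; right
      refine ⟨⟨b, by simpa using hocc'⟩, ?_⟩
      simp at hplen
      omega
    · -- a ≠ [] leads to a contradiction or v a prefix of u2
      have hqv : LexLt q v := lyndon_suffix_lt hv hq.symm hpne hqne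
      have h2v : LexLt u2 v := by
        rcases eq_or_ne q u2 with rfl | hne2
        · exact hqv
        · exact lexLt_trans (Or.inr ⟨⟨b, hqb⟩, hne2⟩) hqv
      rcases h2v with ⟨r, s', t', x, y, hxy, hru2, hrv⟩ | ⟨hpre, -⟩
      · exfalso
        have hvbsuf : v ++ b <:+ u := ⟨a, hocc'⟩
        have hvbne : v ++ b ≠ u := by
          intro h
          rw [h] at hocc'
          have := congrArg List.length hocc'
          simp at this
          exact hane this
        have h2vb : LexLt u2 (v ++ b) :=
          Or.inl ⟨r, s', t' ++ b, x, y, hxy, hru2, by rw [hrv]; simp⟩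
        rcases shirshov_suffix_le ⟨hu12, h1ne, h2ne, h2L, hmax⟩ (v ++ b) hvbsuf
            (by simp [hvne]) hvbne with heq | hlt
        · rw [heq] at h2vb
          exact lexLt_irrefl _ h2vb
        · exact lexLt_asymm hlt h2vb
      · exact Or.inr (Or.inl hpre.isInfix)
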